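/- arXiv:1807.04747 — 2 statements merged into one kernel-verified Lean document; each statement's English description precedes it below -/
import Mathlib

section
/- For a word $u$ and a monomial $v = e_{b_1}\cdots e_{b_n}$ in $\mathbb{Q}\langle e_0,e_1\rangle$ and $a \in \{0,1\}$, one has the identity $(u \shuffle v)e_a - u e_a \epsilon(v) = -\sum_{i=1}^{n} \big((u \shuffle e_{b_{i+1}}\cdots e_{b_n})e_a\big) \shuffle \epsilon(e_{b_1}\cdots e_{b_i})$. -/
/-!
Write `v = e_{b_1} ⋯ e_{b_n}`. Since `ε(v_{≤i}) = (-1)^i · rev(v_{≤i})`, associativity and commutativity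
of `⧢` give `∑_{i=0}^{n} (u ⧢ v_{>i}) ⧢ ε(v_{≤i}) = u ⧢ ∑_{i=0}^{n} (-1)^i rev(v_{≤i}) ⧢ v_{>i}`, and
for `v ≠ 1` this alternating sum vanishes: expanding each shuffle by its first letter, it telescopes.
The theorem is the identity `∑_{i=0}^{n} ((u ⧢ v_{>i}) e_a) ⧢ ε(v_{≤i}) = u e_a ε(v)` with its `i = 0`
term moved to the other side. That identity is proved by induction on `v`: as `ε(v_{≤i+1})` ends in
`-e_{b_1}`, the last-letter recursion `x e_a ⧢ y e_b = (x ⧢ y e_b) e_a + (x e_a ⧢ y) e_b` splits the sum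
into `e_a` appended to the vanishing sum above (the `i = 0` term supplies its first summand) and `e_{b_1}`
appended to the sum for `e_{b_2} ⋯ e_{b_n}`.
-/

open Finsupp

/-- Words in the letters `e₀, e₁`. -/
abbrev Word := List (Fin 2)

/-- The free noncommutative algebra `ℚ⟨e₀,e₁⟩`, as finitely supported functions on words. -/
abbrev QA := Word →₀ ℚ

/-- Concatenation product on `ℚ⟨e₀,e₁⟩`. -/
noncomputable def conc (x y : QA) : QA :=
  x.sum fun u a => y.sum fun v b => Finsupp.single (u ++ v) (a * b)

/-- Shuffle product of two words. -/
noncomputable def sw : Word → Word → QA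
  | [], v => Finsupp.single v 1
  | u :: us, [] => Finsupp.single (u :: us) 1
  | a :: u, b :: v =>
      Finsupp.mapDomain (a :: ·) (sw u (b :: v)) +
      Finsupp.mapDomain (b :: ·) (sw (a :: u) v)
termination_by u v => u.length + v.length

/-- Shuffle product on `ℚ⟨e₀,e₁⟩`, extended bilinearly. -/
noncomputable def shuffle (x y : QA) : QA :=
  x.sum fun u a => y.sum fun v b => (a * b) • sw u v

/-- The anti-automorphism `ε` with `ε(e_a) = -e_a`. -/
noncomputable def eps (x : QA) : QA :=
  x.sum fun u a => Finsupp.single u.reverse ((-1 : ℚ) ^ u.length * a)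

lemma conc_single_single (u v : Word) (r s : ℚ) :
    conc (single u r) (single v s) = single (u ++ v) (r * s) := by
  simp [conc, sum_single_index]

lemma conc_single_right (x : QA) (w : Word) : conc x (single w 1) = mapDomain (· ++ w) x := by
  refine sum_congr fun u _ => ?_
  rw [sum_single_index (by simp), mul_one]

lemma eps_single (w : Word) (r : ℚ) :
    eps (single w r) = single w.reverse ((-1) ^ w.length * r) := by
  simp [eps, sum_single_index]

lemma eps_single_nil : eps (single [] 1) = single [] 1 := by
  simp [eps_single]

lemma eps_single_cons (b : Fin 2) (w : Word) :
    eps (single (b :: w) 1) = -mapDomain (· ++ [b]) (eps (single w 1)) := by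
  simp [eps_single, pow_succ]

lemma mapDomain_neg {α β M : Type*} [AddCommGroup M] (f : α → β) (x : α →₀ M) :
    mapDomain f (-x) = -mapDomain f x :=
  map_neg (mapDomain.addMonoidHom f) x

noncomputable def shuffleBilin : QA →ₗ[ℚ] QA →ₗ[ℚ] QA :=
  Finsupp.lift _ ℚ Word fun u => Finsupp.lift QA ℚ Word (sw u)

lemma shuffle_eq_shuffleBilin (x y : QA) : shuffle x y = shuffleBilin x y := by
  simp [shuffle, shuffleBilin, smul_sum, smul_smul]

lemma shuffle_single_single (u v : Word) (r s : ℚ) :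
    shuffle (single u r) (single v s) = (r * s) • sw u v := by
  simp [shuffle, sum_single_index]

lemma sw_nil_left (v : Word) : sw [] v = single v 1 := by rw [sw]

lemma sw_nil_right (u : Word) : sw u [] = single u 1 := by
  cases u <;> rw [sw]

lemma sw_cons_cons (a b : Fin 2) (u v : Word) :
    sw (a :: u) (b :: v) = mapDomain (a :: ·) (sw u (b :: v)) + mapDomain (b :: ·) (sw (a :: u) v) := by
  rw [sw]

lemma shuffle_add_left (x x' y : QA) : shuffle (x + x') y = shuffle x y + shuffle x' y := by
  simp only [shuffle_eq_shuffleBilin, map_add, LinearMap.add_apply]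

lemma shuffle_add_right (x y y' : QA) : shuffle x (y + y') = shuffle x y + shuffle x y' := by
  simp only [shuffle_eq_shuffleBilin, map_add]

lemma shuffle_neg_right (x y : QA) : shuffle x (-y) = -shuffle x y := by
  simp only [shuffle_eq_shuffleBilin, map_neg]

lemma shuffle_single_nil_right (x : QA) : shuffle x (single [] 1) = x := by
  induction x using induction_linear with
  | zero => simp [shuffle_eq_shuffleBilin]
  | add x y hx hy => rw [shuffle_add_left, hx, hy]
  | single u r => simp [shuffle_single_single, sw_nil_right]

lemma shuffle_single_nil_left (y : QA) : shuffle (single [] 1) y = y := by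
  induction y using induction_linear with
  | zero => simp [shuffle_eq_shuffleBilin]
  | add x y hx hy => rw [shuffle_add_right, hx, hy]
  | single u r => simp [shuffle_single_single, sw_nil_left]

theorem sw_comm : ∀ u v : Word, sw u v = sw v u
  | [], v => by rw [sw_nil_left, sw_nil_right]
  | _ :: _, [] => by rw [sw_nil_left, sw_nil_right]
  | a :: u, b :: v => by
      rw [sw_cons_cons, sw_cons_cons, sw_comm u, sw_comm _ v, add_comm]
termination_by u v => u.length + v.length

lemma mapDomain_append_cons (w : Word) (c : Fin 2) (x : QA) :
    mapDomain (· ++ w) (mapDomain (c :: ·) x) = mapDomain (c :: ·) (mapDomain (· ++ w) x) := by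
  rw [← mapDomain_comp, ← mapDomain_comp]
  rfl

theorem sw_append_singleton : ∀ (u v : Word) (a b : Fin 2),
    sw (u ++ [a]) (v ++ [b]) =
      mapDomain (· ++ [a]) (sw u (v ++ [b])) + mapDomain (· ++ [b]) (sw (u ++ [a]) v)
  | [], [], a, b => by
      simp [sw_cons_cons, sw_nil_left, sw_nil_right, add_comm]
  | [], c :: v, a, b => by
      have h := sw_append_singleton [] v a b
      simp only [List.nil_append, List.cons_append] at h ⊢
      rw [sw_cons_cons, h, sw_cons_cons a c]
      simp only [sw_nil_left, mapDomain_add, mapDomain_single, mapDomain_append_cons, List.cons_append]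
      abel
  | c :: u, [], a, b => by
      have h := sw_append_singleton u [] a b
      simp only [List.nil_append, List.cons_append] at h ⊢
      rw [sw_cons_cons, h, sw_cons_cons c b]
      simp only [sw_nil_right, mapDomain_add, mapDomain_single, mapDomain_append_cons, List.cons_append]
      abel
  | c :: u, d :: v, a, b => by
      simp only [List.cons_append]
      have h₁ := sw_append_singleton u (d :: v) a b
      have h₂ := sw_append_singleton (c :: u) v a b
      simp only [List.cons_append] at h₁ h₂
      rw [sw_cons_cons, h₁, h₂, sw_cons_cons c d u, sw_cons_cons c d (u ++ [a])]
      simp only [mapDomain_add, mapDomain_append_cons]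
      abel
termination_by u v => u.length + v.length

lemma shuffle_mapDomain_mapDomain {f g : Word → Word}
    (h : ∀ u v, sw (f u) (g v) = mapDomain f (sw u (g v)) + mapDomain g (sw (f u) v)) (x y : QA) :
    shuffle (mapDomain f x) (mapDomain g y) =
      mapDomain f (shuffle x (mapDomain g y)) + mapDomain g (shuffle (mapDomain f x) y) := by
  induction x using induction_linear with
  | zero => simp [shuffle_eq_shuffleBilin]
  | add x x' hx hx' =>
      simp only [mapDomain_add, shuffle_add_left, hx, hx']
      abel
  | single u r =>
      induction y using induction_linear with
      | zero => simp [shuffle_eq_shuffleBilin]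
      | add y y' hy hy' =>
          simp only [mapDomain_add, shuffle_add_right, hy, hy']
          abel
      | single v s =>
          simp only [mapDomain_single, shuffle_single_single, h, smul_add, mapDomain_smul]

theorem sw_assoc : ∀ u v w : Word,
    shuffle (sw u v) (single w 1) = shuffle (single u 1) (sw v w)
  | [], v, w => by
      rw [sw_nil_left, shuffle_single_single, one_mul, one_smul, shuffle_single_nil_left]
  | _ :: _, [], w => by
      rw [sw_nil_right, sw_nil_left, shuffle_single_single, one_mul, one_smul]
  | _ :: _, _ :: _, [] => by
      rw [sw_nil_right, shuffle_single_nil_right, shuffle_single_single, one_mul, one_smul]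
  | a :: u, b :: v, c :: w => by
      have h₁ := sw_assoc u (b :: v) (c :: w)
      have h₂ := sw_assoc (a :: u) v (c :: w)
      have h₃ := sw_assoc (a :: u) (b :: v) w
      have hcons : ∀ (d : Fin 2) (t : Word), (single (d :: t) 1 : QA) = mapDomain (d :: ·) (single t 1) :=
        fun _ _ => mapDomain_single.symm
      simp only [hcons, sw_cons_cons, shuffle_add_left, shuffle_add_right,
        shuffle_mapDomain_mapDomain (sw_cons_cons _ _)] at h₁ h₂ h₃ ⊢
      rw [h₁, h₂, ← h₃]
      simp only [mapDomain_add]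
      abel
termination_by u v w => u.length + v.length + w.length

/-- The reversed prefix is carried in front of a nonempty word `d :: p`, so that consecutive summands
share a first-letter term of `sw`, with opposite signs, and the sum telescopes. -/
theorem sum_range_sw_reverse_take_append_cons (d : Fin 2) (p s : Word) :
    ∑ k ∈ Finset.range (s.length + 1), (-1 : ℚ) ^ k • sw ((s.take k).reverse ++ d :: p) (s.drop k) =
      mapDomain (d :: ·) (sw p s) := by
  induction s generalizing d p with
  | nil => simp [sw_nil_right]
  | cons c s ih =>
      have htail : ∀ k, (((c :: s).take (k + 1)).reverse ++ d :: p) = (s.take k).reverse ++ c :: d :: p := by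
        simp
      simp only [List.length_cons, Finset.sum_range_succ', htail, List.drop_succ_cons, pow_succ, mul_neg_one,
        neg_smul, Finset.sum_neg_distrib, ih]
      simp [sw_cons_cons]

theorem sum_range_sw_reverse_take_drop (v : Word) (hv : v ≠ []) :
    ∑ k ∈ Finset.range (v.length + 1), (-1 : ℚ) ^ k • sw (v.take k).reverse (v.drop k) = 0 := by
  obtain ⟨c, s, rfl⟩ := List.exists_cons_of_ne_nil hv
  have h := sum_range_sw_reverse_take_append_cons c [] s
  simp only [List.length_cons, Finset.sum_range_succ', List.take_succ_cons, List.reverse_cons, List.drop_succ_cons,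
    pow_succ, mul_neg_one, neg_smul, Finset.sum_neg_distrib, h]
  simp [sw_nil_left]

theorem sum_range_shuffle_sw_drop_eps_take (u v : Word) (hv : v ≠ []) :
    ∑ i ∈ Finset.range (v.length + 1), shuffle (sw u (v.drop i)) (eps (single (v.take i) 1)) = 0 := by
  have hterm : ∀ i ∈ Finset.range (v.length + 1),
      shuffle (sw u (v.drop i)) (eps (single (v.take i) 1)) =
        shuffleBilin (single u 1) ((-1 : ℚ) ^ i • sw (v.take i).reverse (v.drop i)) := by
    intro i hi
    have hlen : (v.take i).length = i := List.length_take_of_le (Finset.mem_range_succ_iff.mp hi)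
    rw [eps_single, hlen, mul_one, ← smul_single_one, shuffle_eq_shuffleBilin, map_smul,
      ← shuffle_eq_shuffleBilin, sw_assoc, sw_comm, shuffle_eq_shuffleBilin, map_smul]
  rw [Finset.sum_congr rfl hterm, ← map_sum, sum_range_sw_reverse_take_drop v hv, map_zero]

theorem sum_range_shuffle_conc_sw_drop_eps_take (u : Word) (a : Fin 2) (v : Word) :
    ∑ i ∈ Finset.range (v.length + 1),
        shuffle (conc (sw u (v.drop i)) (single [a] 1)) (eps (single (v.take i) 1)) =
      single (u ++ a :: v.reverse) ((-1) ^ v.length) := by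
  induction v with
  | nil => simp [sw_nil_right, eps_single_nil, shuffle_single_nil_right, conc_single_right]
  | cons b w ih =>
      have hterm : ∀ j, shuffle (conc (sw u ((b :: w).drop (j + 1))) (single [a] 1))
            (eps (single ((b :: w).take (j + 1)) 1)) =
          mapDomain (· ++ [a]) (shuffle (sw u ((b :: w).drop (j + 1))) (eps (single ((b :: w).take (j + 1)) 1))) -
            mapDomain (· ++ [b]) (shuffle (conc (sw u (w.drop j)) (single [a] 1)) (eps (single (w.take j) 1))) := by
        intro j
        simp only [List.take_succ_cons, List.drop_succ_cons, eps_single_cons, conc_single_right, shuffle_neg_right,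
          mapDomain_neg, shuffle_mapDomain_mapDomain (sw_append_singleton · · a b)]
        abel
      have hsum := sum_range_shuffle_sw_drop_eps_take u (b :: w) (List.cons_ne_nil b w)
      rw [List.length_cons, Finset.sum_range_succ'] at hsum ⊢
      simp only [hterm, Finset.sum_sub_distrib, ← mapDomain_finsetSum, ih]
      simp only [List.drop_zero, List.take_zero, eps_single_nil, shuffle_single_nil_right] at hsum ⊢
      rw [eq_neg_of_add_eq_zero_left hsum, mapDomain_neg, mapDomain_single, conc_single_right]
      simp only [List.reverse_cons, List.append_assoc, List.cons_append, pow_succ, mul_neg_one, single_neg]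
      abel

/-- The explicit shuffle identity
`(u ⧢ v)e_a - u e_a ε(v) = -∑_{i=1}^{n} ((u ⧢ e_{b_{i+1}}⋯e_{b_n})e_a) ⧢ ε(e_{b_1}⋯e_{b_i})`. -/
theorem stmt1 (u v : Word) (a : Fin 2) :
    conc (sw u v) (Finsupp.single [a] 1)
      - conc (conc (Finsupp.single u 1) (Finsupp.single [a] 1)) (eps (Finsupp.single v 1))
    = -∑ i ∈ Finset.range v.length,
        shuffle (conc (sw u (v.drop (i + 1))) (Finsupp.single [a] 1))
          (eps (Finsupp.single (v.take (i + 1)) 1)) := by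
  have h := sum_range_shuffle_conc_sw_drop_eps_take u a v
  rw [Finset.sum_range_succ', List.drop_zero, List.take_zero, eps_single_nil, shuffle_single_nil_right] at h
  rw [eps_single, conc_single_single, conc_single_single, mul_one, mul_one, one_mul, List.append_assoc,
    List.singleton_append, ← h]
  abel
end

section
/- Let $A$ be a commutative $\mathbb{Q}$-algebra, and let $g, h: (\mathbb{I}, *) \to A$ be algebra homomorphisms from the harmonic algebra of indices to $A$. Then the map $f: \mathbb{I} \to A$ defined by $f(\Bbbk) = \sum_{i=0}^{d} g(k_1,\dots,k_i)\, h(k_{i+1},\dots,k_d)$ for $\Bbbk = (k_1,\dots,k_d)$ is also an algebra homomorphism with respect to the harmonic product: $f(\Bbbk * \Bbbk') = f(\Bbbk) f(\Bbbk')$. -/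
/-!
Deconcatenation is an algebra morphism for the harmonic product (the quasi-shuffle
bialgebra of Hoffman). Read through the convolution `f = μ ∘ (g ⊗ h) ∘ Δ` this says
`f (u * v) = ∑ i j, g (u≤i * v≤j) h (u>i * v>j)`, which follows by induction on
`|u| + |v|` from the recursion of `*`: peeling off the first letter of a word splits
`Δ (a w)` into `1 ⊗ a w` and `(a · ⊗ id) Δ w`. When `g` and `h` are multiplicative and
`A` is commutative, the double sum factors as `f u * f v`.
-/

open Finsupp

/-- The ℚ-vector space `𝕀` with basis all finite tuples of positive integers. -/
abbrev II := List ℕ+ →₀ ℚ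

/-- The harmonic (stuffle) product of two indices. -/
noncomputable def harW : List ℕ+ → List ℕ+ → II
  | [], v => Finsupp.single v 1
  | u :: us, [] => Finsupp.single (u :: us) 1
  | k :: ks, l :: ls =>
      Finsupp.mapDomain (k :: ·) (harW ks (l :: ls)) +
      Finsupp.mapDomain (l :: ·) (harW (k :: ks) ls) +
      Finsupp.mapDomain ((k + l) :: ·) (harW ks ls)
termination_by u v => u.length + v.length

/-- The harmonic product on `𝕀`, extended bilinearly. -/
noncomputable def har (x y : II) : II :=
  x.sum fun u a => y.sum fun v b => (a * b) • harW u v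

/-- The harmonic product as a bilinear map. -/
noncomputable def harL : II →ₗ[ℚ] II →ₗ[ℚ] II :=
  Finsupp.lsum ℚ fun u => LinearMap.toSpanSingleton ℚ (II →ₗ[ℚ] II)
    (Finsupp.lsum ℚ fun v => LinearMap.toSpanSingleton ℚ II (harW u v))

noncomputable def consL (a : ℕ+) : II →ₗ[ℚ] II := Finsupp.lmapDomain ℚ ℚ (a :: ·)

lemma consL_single (a : ℕ+) (w : List ℕ+) (c : ℚ) :
    consL a (single w c) = single (a :: w) c :=
  mapDomain_single

lemma harW_nil_left (v : List ℕ+) : harW [] v = single v 1 := by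
  rw [harW]

lemma harW_nil_right (u : List ℕ+) : harW u [] = single u 1 := by
  cases u <;> rw [harW]

lemma harW_cons_cons (k l : ℕ+) (ks ls : List ℕ+) :
    harW (k :: ks) (l :: ls) = consL k (harW ks (l :: ls)) + consL l (harW (k :: ks) ls) +
      consL (k + l) (harW ks ls) := by
  rw [harW]; rfl

lemma harL_single_single (u v : List ℕ+) (a b : ℚ) :
    harL (single u a) (single v b) = (a * b) • harW u v := by
  simp [harL, smul_smul]

section Convolution

variable {A : Type*} [Semiring A] [Algebra ℚ A]

noncomputable def deconcatConv (g h : II →ₗ[ℚ] A) : II →ₗ[ℚ] A :=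
  Finsupp.lsum ℚ fun w => LinearMap.toSpanSingleton ℚ A
    (∑ i ∈ Finset.range (w.length + 1), g (single (w.take i) 1) * h (single (w.drop i) 1))

lemma deconcatConv_single (g h : II →ₗ[ℚ] A) (w : List ℕ+) :
    deconcatConv g h (single w 1) =
      ∑ i ∈ Finset.range (w.length + 1), g (single (w.take i) 1) * h (single (w.drop i) 1) := by
  simp [deconcatConv]

lemma deconcatConv_consL (g h : II →ₗ[ℚ] A) (a : ℕ+) (x : II) :
    deconcatConv g h (consL a x) =
      g (single [] 1) * h (consL a x) + deconcatConv (g ∘ₗ consL a) h x := by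
  induction x using Finsupp.induction_linear with
  | zero => simp
  | add x y hx hy => simp only [map_add, hx, hy, mul_add]; abel
  | single w c =>
    rw [← mul_one c, ← smul_eq_mul, ← smul_single]
    simp only [map_smul, consL_single, deconcatConv_single, LinearMap.comp_apply,
      mul_smul_comm, ← smul_add, List.length_cons]
    rw [Finset.sum_range_succ', add_comm]
    simp

theorem deconcatConv_harW (u v : List ℕ+) (g h : II →ₗ[ℚ] A) :
    deconcatConv g h (harW u v) =
      ∑ i ∈ Finset.range (u.length + 1), ∑ j ∈ Finset.range (v.length + 1),
        g (harW (u.take i) (v.take j)) * h (harW (u.drop i) (v.drop j)) :=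
  match u, v with
  | [], v => by simp [harW_nil_left, deconcatConv_single]
  | k :: ks, [] => by simp [harW_nil_right, deconcatConv_single]
  | k :: ks, l :: ls => by
    rw [harW_cons_cons, map_add, map_add, deconcatConv_consL, deconcatConv_consL,
      deconcatConv_consL, deconcatConv_harW ks (l :: ls), deconcatConv_harW (k :: ks) ls,
      deconcatConv_harW ks ls]
    simp only [List.length_cons, Finset.sum_range_succ', List.take_succ_cons,
      List.drop_succ_cons, List.take_zero, List.drop_zero, harW_nil_left, harW_nil_right,
      harW_cons_cons, consL_single, map_add, add_mul, mul_add, LinearMap.comp_apply,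
      Finset.sum_add_distrib]
    abel
termination_by u.length + v.length

end Convolution

lemma map_harL_of_map_harW {A : Type*} [CommSemiring A] [Algebra ℚ A] (φ : II →ₗ[ℚ] A)
    (hφ : ∀ u v, φ (harW u v) = φ (single u 1) * φ (single v 1)) (x y : II) :
    φ (harL x y) = φ x * φ y := by
  have : harL.compr₂ φ = (LinearMap.mul ℚ A).compl₁₂ φ φ := by
    ext u v
    simp [harL_single_single, hφ]
  exact LinearMap.congr_fun₂ this x y

lemma map_harW_of_map_harL {A : Type*} [Semiring A] [Algebra ℚ A] (φ : II →ₗ[ℚ] A)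
    (hφ : ∀ x y, φ (harL x y) = φ x * φ y) (u v : List ℕ+) :
    φ (harW u v) = φ (single u 1) * φ (single v 1) := by
  simpa [harL_single_single] using hφ (single u 1) (single v 1)

/-- The convolution (with respect to the deconcatenation coproduct) of two algebra
homomorphisms `g, h : (𝕀,*) → A` into a commutative `ℚ`-algebra is again an algebra
homomorphism for the harmonic product. -/
theorem stmt5 (A : Type*) [CommRing A] [Algebra ℚ A] (g h : II →ₗ[ℚ] A)
    (hg : ∀ x y : II, g (harL x y) = g x * g y)
    (hh : ∀ x y : II, h (harL x y) = h x * h y)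
    (f : II →ₗ[ℚ] A)
    (hf : ∀ k : List ℕ+, f (Finsupp.single k 1) =
      ∑ i ∈ Finset.range (k.length + 1),
        g (Finsupp.single (k.take i) 1) * h (Finsupp.single (k.drop i) 1)) :
    ∀ x y : II, f (harL x y) = f x * f y := by
  have hf_eq : f = deconcatConv g h := by
    ext w
    simp [hf, deconcatConv_single]
  subst hf_eq
  refine map_harL_of_map_harW _ fun u v => ?_
  rw [deconcatConv_harW, deconcatConv_single, deconcatConv_single, Finset.sum_mul_sum]
  refine Finset.sum_congr rfl fun i _ => Finset.sum_congr rfl fun j _ => ?_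
  rw [map_harW_of_map_harL g hg, map_harW_of_map_harL h hh]
  ring
end
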